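/- arXiv:0711.0358 — 4 statements merged into one kernel-verified Lean document; each statement's English description precedes it below -/
import Mathlib

section
/- Let x, y be positive integers with x > y, and let l be a natural number. Define S_p = {(m₁,m₂) ∈ ℕ₊² : l = m₁x + m₂y}, S_q = {(n₁,n₂) ∈ ℕ² : l = x + n₁x + n₂(x−y)}, S_r = {(m,n) ∈ ℕ₊ × ℕ : l = y + m(x−y) + ny}. Then the map sending (m,n) ∈ S_r to (m, 1−m+n) ∈ S_p if 1−m+n > 0, and to (n, −1+m−n) ∈ S_q if 1−m+n ≤ 0, is a bijection from S_r onto the disjoint union S_p ⊔ S_q. -/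
/-!
Both representations come from the identity
`y + m(x - y) + ny = mx + (1 - m + n)y = x + nx + (m - 1 - n)(x - y)`,
which holds for all integers; the sign of `1 - m + n` decides which one has admissible
coefficients, and `(m, n)` is recovered from either image.
-/

def splitMap (p : ℤ × ℤ) : (ℤ × ℤ) ⊕ (ℤ × ℤ) :=
  if 0 < 1 - p.1 + p.2 then .inl (p.1, 1 - p.1 + p.2) else .inr (p.2, -1 + p.1 - p.2)

theorem splitMap_injective : Function.Injective splitMap := by
  rintro ⟨m, n⟩ ⟨m', n'⟩ h
  simp only [splitMap] at h
  split_ifs at h <;> simp only [Sum.inl.injEq, Sum.inr.injEq, Prod.mk.injEq] at h <;> ext <;> omega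

section Representations

variable (x y l : ℤ)

def reprP : Set (ℤ × ℤ) := {m | 0 < m.1 ∧ 0 < m.2 ∧ l = m.1 * x + m.2 * y}

def reprQ : Set (ℤ × ℤ) := {n | 0 ≤ n.1 ∧ 0 ≤ n.2 ∧ l = x + n.1 * x + n.2 * (x - y)}

def reprR : Set (ℤ × ℤ) := {p | 0 < p.1 ∧ 0 ≤ p.2 ∧ l = y + p.1 * (x - y) + p.2 * y}

theorem splitMap_mapsTo :
    Set.MapsTo splitMap (reprR x y l) (.inl '' reprP x y l ∪ .inr '' reprQ x y l) := by
  rintro ⟨m, n⟩ ⟨hm, hn, hl⟩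
  unfold splitMap
  split_ifs with h
  · exact .inl ⟨(m, 1 - m + n), ⟨hm, h, by linear_combination hl⟩, rfl⟩
  · exact .inr ⟨(n, -1 + m - n), ⟨hn, by dsimp only; omega, by linear_combination hl⟩, rfl⟩

theorem splitMap_surjOn :
    Set.SurjOn splitMap (reprR x y l) (.inl '' reprP x y l ∪ .inr '' reprQ x y l) := by
  rintro _ (⟨⟨a, b⟩, ⟨ha, hb, hl⟩, rfl⟩ | ⟨⟨a, b⟩, ⟨ha, hb, hl⟩, rfl⟩)
  · refine ⟨(a, a + b - 1), ⟨ha, by dsimp only at *; omega, by linear_combination hl⟩, ?_⟩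
    simp only [splitMap, show 1 - a + (a + b - 1) = b by ring, if_pos hb]
  · refine ⟨(1 + a + b, a), ⟨by dsimp only at *; omega, ha, by linear_combination hl⟩, ?_⟩
    simp only [splitMap, show 1 - (1 + a + b) + a = -b by ring,
      show -1 + (1 + a + b) - a = b by ring,
      if_neg (show ¬0 < -b by omega)]

theorem splitMap_bijOn :
    Set.BijOn splitMap (reprR x y l) (.inl '' reprP x y l ∪ .inr '' reprQ x y l) :=
  ⟨splitMap_mapsTo x y l, splitMap_injective.injOn, splitMap_surjOn x y l⟩

end Representations

theorem stmt_4_general (x y : ℤ) (l : ℕ)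
    (Sp : Set (ℤ × ℤ)) (hSp : Sp = {m : ℤ × ℤ | 0 < m.1 ∧ 0 < m.2 ∧ (l : ℤ) = m.1 * x + m.2 * y})
    (Sq : Set (ℤ × ℤ)) (hSq : Sq = {n : ℤ × ℤ | 0 ≤ n.1 ∧ 0 ≤ n.2 ∧ (l : ℤ) = x + n.1 * x + n.2 * (x - y)})
    (Sr : Set (ℤ × ℤ)) (hSr : Sr = {p : ℤ × ℤ | 0 < p.1 ∧ 0 ≤ p.2 ∧ (l : ℤ) = y + p.1 * (x - y) + p.2 * y})
    (f : ℤ × ℤ → (ℤ × ℤ) ⊕ (ℤ × ℤ))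
    (hf : f = fun p => if 0 < 1 - p.1 + p.2 then Sum.inl (p.1, 1 - p.1 + p.2)
      else Sum.inr (p.2, -1 + p.1 - p.2)) :
    Set.BijOn f Sr (Sum.inl '' Sp ∪ Sum.inr '' Sq) := by
  subst hSp hSq hSr hf
  exact splitMap_bijOn x y l

/-- The explicit map `(m,n) ↦ (m, 1−m+n)` or `(n, −1+m−n)` is a bijection from
`S_r` onto the disjoint union `S_p ⊔ S_q`. -/
theorem stmt_4 (x y : ℤ) (hy : 0 < y) (hxy : y < x) (l : ℕ)
    (Sp : Set (ℤ × ℤ)) (hSp : Sp = {m : ℤ × ℤ | 0 < m.1 ∧ 0 < m.2 ∧ (l : ℤ) = m.1 * x + m.2 * y})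
    (Sq : Set (ℤ × ℤ)) (hSq : Sq = {n : ℤ × ℤ | 0 ≤ n.1 ∧ 0 ≤ n.2 ∧ (l : ℤ) = x + n.1 * x + n.2 * (x - y)})
    (Sr : Set (ℤ × ℤ)) (hSr : Sr = {p : ℤ × ℤ | 0 < p.1 ∧ 0 ≤ p.2 ∧ (l : ℤ) = y + p.1 * (x - y) + p.2 * y})
    (f : ℤ × ℤ → (ℤ × ℤ) ⊕ (ℤ × ℤ))
    (hf : f = fun p => if 0 < 1 - p.1 + p.2 then Sum.inl (p.1, 1 - p.1 + p.2)
      else Sum.inr (p.2, -1 + p.1 - p.2)) :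
    Set.BijOn f Sr (Sum.inl '' Sp ∪ Sum.inr '' Sq) :=
  stmt_4_general x y l Sp hSp Sq hSq Sr hSr f hf
end

section
/- Let x, y be positive integers with x > y. For every natural number l, the number of pairs (m,n) with m ≥ 1, n ≥ 0 and l = y + m(x−y) + ny equals the number of pairs (m₁,m₂) with m₁,m₂ ≥ 1 and l = m₁x + m₂y plus the number of pairs (n₁,n₂) with n₁,n₂ ≥ 0 and l = x + n₁x + n₂(x−y). -/
/-!
Every `r`-solution `(m, n)` of `l = y + m(x - y) + ny` falls into exactly one of two families.
If `m ≤ n`, then `(m, n - m + 1)` is a `p`-solution of `l = m₁x + m₂y`; if `n < m`, then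
`(n, m - n - 1)` is a `q`-solution of `l = x + n₁x + n₂(x - y)`. Both substitutions are affine
and invertible, so the `r`-solutions are in bijection with the disjoint union of the `p`- and
`q`-solutions. Positivity of `y` and `x - y` makes these sets finite, so cardinalities add.
-/

section Solutions

variable (x y l : ℤ)

def rSolutions : Type := {p : ℤ × ℤ // 1 ≤ p.1 ∧ 0 ≤ p.2 ∧ l = y + p.1 * (x - y) + p.2 * y}

def pSolutions : Type := {m : ℤ × ℤ // 1 ≤ m.1 ∧ 1 ≤ m.2 ∧ l = m.1 * x + m.2 * y}

def qSolutions : Type := {n : ℤ × ℤ // 0 ≤ n.1 ∧ 0 ≤ n.2 ∧ l = x + n.1 * x + n.2 * (x - y)}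

def pSolutionsSumQSolutionsEquiv : pSolutions x y l ⊕ qSolutions x y l ≃ rSolutions x y l where
  toFun
    | .inl ⟨(m₁, m₂), hm₁, hm₂, hl⟩ =>
      ⟨(m₁, m₁ + m₂ - 1), hm₁, by linarith, by linear_combination hl⟩
    | .inr ⟨(n₁, n₂), hn₁, hn₂, hl⟩ =>
      ⟨(n₁ + n₂ + 1, n₁), by linarith, hn₁, by linear_combination hl⟩
  invFun p :=
    if h : p.1.1 ≤ p.1.2 then
      .inl ⟨(p.1.1, p.1.2 - p.1.1 + 1), p.2.1, by linarith, by linear_combination p.2.2.2⟩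
    else
      .inr ⟨(p.1.2, p.1.1 - p.1.2 - 1), p.2.2.1, by linarith, by linear_combination p.2.2.2⟩
  left_inv := by
    rintro (⟨⟨m₁, m₂⟩, hm₁, hm₂, -⟩ | ⟨⟨n₁, n₂⟩, hn₁, hn₂, -⟩)
    · dsimp only
      rw [dif_pos (by linarith)]
      exact congrArg Sum.inl (Subtype.ext (Prod.ext rfl (by ring)))
    · dsimp only
      rw [dif_neg (by linarith)]
      exact congrArg Sum.inr (Subtype.ext (Prod.ext rfl (by ring)))
  right_inv := by
    rintro ⟨⟨m, n⟩, hp⟩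
    by_cases h : m ≤ n
    · dsimp only
      rw [dif_pos h]
      exact Subtype.ext (Prod.ext rfl (by ring))
    · dsimp only
      rw [dif_neg h]
      exact Subtype.ext (Prod.ext (by ring) rfl)

end Solutions

theorem finite_setOf_nonneg_mul_add_mul_le {a b : ℤ} (ha : 0 < a) (hb : 0 < b) (c : ℤ) :
    {p : ℤ × ℤ | 0 ≤ p.1 ∧ 0 ≤ p.2 ∧ p.1 * a + p.2 * b ≤ c}.Finite :=
  (Set.finite_Icc (0, 0) (c, c)).subset fun p ⟨h₁, h₂, h⟩ => by
    refine ⟨⟨h₁, h₂⟩, ?_, ?_⟩ <;> nlinarith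

theorem pSolutions_finite {x y : ℤ} (hx : 0 < x) (hy : 0 < y) (l : ℤ) :
    Finite (pSolutions x y l) :=
  Set.Finite.to_subtype <| (finite_setOf_nonneg_mul_add_mul_le hx hy l).subset
    fun _ ⟨h₁, h₂, h⟩ => ⟨by linarith, by linarith, h.ge⟩

theorem qSolutions_finite {x y : ℤ} (hx : 0 < x) (hxy : y < x) (l : ℤ) :
    Finite (qSolutions x y l) :=
  Set.Finite.to_subtype <| (finite_setOf_nonneg_mul_add_mul_le hx (sub_pos.2 hxy) (l - x)).subset
    fun _ ⟨h₁, h₂, h⟩ => ⟨h₁, h₂, by linarith⟩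

/-- Counting identity `N_r(l) = N_p(l) + N_q(l)` for the `S¹`-action on `ℂP²`. -/
theorem stmt_5 (x y : ℤ) (hy : 0 < y) (hxy : y < x) (l : ℕ) :
    Nat.card {p : ℤ × ℤ // 1 ≤ p.1 ∧ 0 ≤ p.2 ∧ (l : ℤ) = y + p.1 * (x - y) + p.2 * y} =
      Nat.card {m : ℤ × ℤ // 1 ≤ m.1 ∧ 1 ≤ m.2 ∧ (l : ℤ) = m.1 * x + m.2 * y} +
      Nat.card {n : ℤ × ℤ // 0 ≤ n.1 ∧ 0 ≤ n.2 ∧ (l : ℤ) = x + n.1 * x + n.2 * (x - y)} := by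
  have hx : 0 < x := hy.trans hxy
  have := pSolutions_finite hx hy l
  have := qSolutions_finite hx hxy l
  calc Nat.card (rSolutions x y l)
      = Nat.card (pSolutions x y l ⊕ qSolutions x y l) :=
        Nat.card_congr (pSolutionsSumQSolutionsEquiv x y l).symm
    _ = Nat.card (pSolutions x y l) + Nat.card (qSolutions x y l) := Nat.card_sum
end

section
/- Let I ⊆ ℤ be a subgroup (ideal), Q a finite nonempty set, J: {p} ∪ Q → ℤ, and α a nonzero integer. Suppose for every sufficiently large natural number m there exists q ∈ Q with J(p) − J(q) + m·α ∈ I. Then there exists a natural number c with 1 ≤ c ≤ #Q such that c·α ∈ I, and there exists q ∈ Q with J(p) − J(q) ∈ I. -/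
/-!
If `x_q + m • a ∈ H` for a suitable `q ∈ Q` whenever `m ≥ M`, then among the `#Q + 1` values
`m = M, …, M + #Q` two share the same `q`; subtracting them gives `c • a ∈ H` with `1 ≤ c ≤ #Q`.
Taking `m = c * M`, a multiple of `c` that is at least `M`, then shows `x_q ∈ H` for some `q`.
-/

namespace AddSubgroup

variable {G ι : Type*} [AddCommGroup G] (H : AddSubgroup G)

theorem sub_nsmul_mem_of_add_nsmul_mem {x a : G} {i j : ℕ} (hij : i ≤ j)
    (hi : x + i • a ∈ H) (hj : x + j • a ∈ H) : (j - i) • a ∈ H := by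
  rw [sub_nsmul a hij, ← sub_eq_add_neg, ← add_sub_add_left_eq_sub _ _ x]
  exact H.sub_mem hj hi

variable {Q : Finset ι} {x : ι → G} {a : G} {M : ℕ}

theorem exists_nsmul_mem_of_forall_ge_exists_add_nsmul_mem
    (hM : ∀ m, M ≤ m → ∃ q ∈ Q, x q + m • a ∈ H) :
    ∃ c : ℕ, 1 ≤ c ∧ c ≤ Q.card ∧ c • a ∈ H := by
  choose g hgQ hgH using fun t : ℕ => hM (M + t) le_self_add
  obtain ⟨i, hi, j, hj, hne, hgij⟩ := Finset.exists_ne_map_eq_of_card_lt_of_maps_to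
    (s := Finset.range (Q.card + 1)) (by simp) fun t _ => hgQ t
  wlog hlt : i < j generalizing i j
  · exact this j hj i hi hne.symm hgij.symm (by omega)
  have hmem := H.sub_nsmul_mem_of_add_nsmul_mem (by omega) (hgH i) (hgij ▸ hgH j)
  rw [Finset.mem_range] at hi hj
  exact ⟨j - i, by omega, by omega, by rwa [Nat.add_sub_add_left] at hmem⟩

theorem exists_mem_of_forall_ge_exists_add_nsmul_mem
    (hM : ∀ m, M ≤ m → ∃ q ∈ Q, x q + m • a ∈ H) {c : ℕ} (hc : 1 ≤ c) (hca : c • a ∈ H) :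
    ∃ q ∈ Q, x q ∈ H := by
  obtain ⟨q, hq, hqH⟩ := hM (c * M) (Nat.le_mul_of_pos_left M hc)
  have hmul : (c * M) • a ∈ H := by
    rw [mul_nsmul]
    exact H.nsmul_mem hca M
  exact ⟨q, hq, by simpa only [add_sub_cancel_right] using H.sub_mem hqH hmul⟩

end AddSubgroup

theorem stmt_8_general {ι : Type*} (I : AddSubgroup ℤ) (Q : Finset ι)
    (J : ι → ℤ) (Jp : ℤ) (α : ℤ)
    (h : ∃ M : ℕ, ∀ m : ℕ, M ≤ m → ∃ q ∈ Q, Jp - J q + (m : ℤ) * α ∈ I) :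
    (∃ c : ℕ, 1 ≤ c ∧ c ≤ Q.card ∧ (c : ℤ) * α ∈ I) ∧
      ∃ q ∈ Q, Jp - J q ∈ I := by
  obtain ⟨M, hM⟩ := h
  simp only [← nsmul_eq_mul] at hM ⊢
  obtain ⟨c, hc, hcQ, hca⟩ := I.exists_nsmul_mem_of_forall_ge_exists_add_nsmul_mem hM
  exact ⟨⟨c, hc, hcQ, hca⟩, I.exists_mem_of_forall_ge_exists_add_nsmul_mem hM hc hca⟩

/-- Pigeonhole argument underlying Proposition 3.2 of the paper. -/
theorem stmt_8 {ι : Type*} (I : AddSubgroup ℤ) (Q : Finset ι) (hQ : Q.Nonempty)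
    (J : ι → ℤ) (Jp : ℤ) (α : ℤ) (hα : α ≠ 0)
    (h : ∃ M : ℕ, ∀ m : ℕ, M ≤ m → ∃ q ∈ Q, Jp - J q + (m : ℤ) * α ∈ I) :
    (∃ c : ℕ, 1 ≤ c ∧ c ≤ Q.card ∧ (c : ℤ) * α ∈ I) ∧
      ∃ q ∈ Q, Jp - J q ∈ I :=
  stmt_8_general I Q J Jp α h
end

section
/- Let α₁, α₂, β be positive integers and J_q, J_F integers, and let A₀, A₁ be integers. Suppose that for all λ with 0 < |λ| < 1, ∑_{m₁,m₂≥1} λ^{m₁α₁+m₂α₂+J_q} + A₀ ∑_{l≥0} λ^{J_F+lβ} + A₁ ∑_{l₁,l₂≥0} λ^{J_F+(l₁+l₂+1)β} equals a Laurent polynomial in λ. Then for all sufficiently large natural numbers n₀, the count #{(m₁,m₂) : m₁,m₂ ≥ 1, m₁α₁ + m₂α₂ = J_F − J_q + n₀β} equals −A₀ − n₀A₁. -/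
/-!
Expanding every series as `∑ₖ cₖ λᵏ` by grouping the terms by exponent, the hypothesis says that a
Laurent series with exponents bounded below vanishes on the punctured unit disc. After a shift
this is a power series vanishing on a punctured disc, so all its coefficients vanish by the
isolated zeros principle. At `k = J_F + n₀β`, beyond the exponents of the Laurent polynomial, the
coefficient is `N_q(k) + A₀ + n₀A₁`, where `N_q(k)` counts the pairs `m₁, m₂ ≥ 1` with
`m₁α₁ + m₂α₂ + J_q = k`: the exponent `J_F + lβ` equals `k` once and `J_F + (l₁ + l₂ + 1)β`
equals it `n₀` times.
-/

open Topology FormalMultilinearSeries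

section IdentityTheorem

variable {𝕜 : Type*} [NontriviallyNormedField 𝕜] [CompleteSpace 𝕜]

theorem eq_zero_of_hasSum_pow_eq_zero {c : ℕ → 𝕜} {r : ℝ} (hr : 0 < r)
    (h : ∀ z : 𝕜, 0 < ‖z‖ → ‖z‖ < r → HasSum (fun n => c n * z ^ n) 0) : c = 0 := by
  rw [← ofScalars_series_eq_zero 𝕜]
  set p := ofScalars 𝕜 c
  obtain ⟨z₀, hz₀, hz₀r⟩ := NormedField.exists_norm_lt 𝕜 hr
  have hradius : 0 < p.radius := by
    refine lt_of_lt_of_le (by simpa using hz₀) (p.le_radius_of_tendsto (r := ‖z₀‖₊) (l := 0) ?_)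
    simpa [p, ofScalars_norm, norm_mul, norm_pow]
      using (h z₀ hz₀ hz₀r).summable.tendsto_atTop_zero.norm
  have hzero : ∀ᶠ z in 𝓝[≠] (0 : 𝕜), p.sum z = 0 := by
    filter_upwards [self_mem_nhdsWithin, nhdsWithin_le_nhds (Metric.ball_mem_nhds (0 : 𝕜) hr)]
      with z hz hzr
    change ofScalarsSum c z = 0
    simpa [ofScalars_sum_eq] using (h z (norm_pos_iff.2 hz) (by simpa using hzr)).tsum_eq
  by_contra hp
  obtain ⟨z, hz, hz'⟩ :=
    (((p.hasFPowerSeriesOnBall hradius).hasFPowerSeriesAt.locally_ne_zero hp).and hzero).exists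
  exact hz hz'

theorem eq_zero_of_hasSum_zpow_eq_zero {c : ℤ → 𝕜} {N : ℤ} (hc : ∀ k < N, c k = 0) {r : ℝ}
    (hr : 0 < r) (h : ∀ z : 𝕜, 0 < ‖z‖ → ‖z‖ < r → HasSum (fun k => c k * z ^ k) 0) : c = 0 := by
  have hshift : (fun n : ℕ => c (n + N)) = 0 := by
    refine eq_zero_of_hasSum_pow_eq_zero hr fun z hz hzr => ?_
    have hz0 : z ≠ 0 := norm_pos_iff.1 hz
    have hinj : Function.Injective (fun n : ℕ => (n : ℤ) + N) := fun m n hmn => by simpa using hmn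
    have hsupp : ∀ k ∉ Set.range (fun n : ℕ => (n : ℤ) + N), c k * z ^ k = 0 := fun k hk => by
      have hkN : k < N := by
        by_contra! hkN
        exact hk ⟨(k - N).toNat, by simp; omega⟩
      simp [hc k hkN]
    have hsum := ((hinj.hasSum_iff hsupp).mpr (h z hz hzr)).mul_right (z ^ (-N))
    refine (zero_mul (z ^ (-N)) ▸ hsum).congr_fun fun n => ?_
    simp only [Function.comp_apply, mul_assoc, zpow_neg, zpow_add₀ hz0, zpow_natCast,
      mul_inv_cancel_right₀ (zpow_ne_zero N hz0)]
  funext k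
  rcases lt_or_ge k N with hkN | hkN
  · exact hc k hkN
  · simpa [hkN] using congr_fun hshift (k - N).toNat

end IdentityTheorem

theorem HasSum.natCard_fiber_smul {ι κ M : Type*} [AddCommGroup M] [UniformSpace M]
    [IsUniformAddGroup M] [CompleteSpace M] [T2Space M] {g : ι → κ} {φ : κ → M} {a : M}
    (hs : HasSum (fun i => φ (g i)) a) : HasSum (fun k => Nat.card {i // g i = k} • φ k) a := by
  refine (hs.tsum_fiberwise g).congr_fun fun k => ?_
  have hconst : ∀ i : g ⁻¹' {k}, φ (g i) = φ k := fun i => congrArg φ i.2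
  rw [tsum_congr hconst, tsum_const]
  rfl

theorem natCard_fiber_eq_zero_of_lt {ι κ : Type*} [Preorder κ] {g : ι → κ} {N k : κ}
    (hg : ∀ i, N ≤ g i) (hk : k < N) : Nat.card {i // g i = k} = 0 :=
  have : IsEmpty {i // g i = k} := ⟨fun ⟨i, hi⟩ => hk.not_ge (hi ▸ hg i)⟩
  Nat.card_of_isEmpty

section Geometric

variable {𝕜 : Type*} [NormedField 𝕜] {z : 𝕜}

theorem summable_norm_zpow_natCast_mul (hz : ‖z‖ < 1) {a : ℤ} (ha : 0 < a) :
    Summable (fun n : ℕ => ‖z ^ ((n : ℤ) * a)‖) := by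
  lift a to ℕ using ha.le
  have hza : ‖z ^ a‖ < 1 := by
    rw [norm_pow]; exact pow_lt_one₀ (norm_nonneg z) hz (by omega)
  refine (summable_geometric_of_lt_one (norm_nonneg _) hza).congr fun n => ?_
  rw [← Nat.cast_mul, zpow_natCast, mul_comm, pow_mul]
  simp only [norm_pow]

variable [CompleteSpace 𝕜]

theorem summable_zpow_add_natCast_mul (hz0 : z ≠ 0) (hz : ‖z‖ < 1) (c : ℤ) {a : ℤ} (ha : 0 < a) :
    Summable (fun n : ℕ => z ^ (c + (n : ℤ) * a)) := by
  simpa [zpow_add₀ hz0] using (summable_norm_zpow_natCast_mul hz ha).of_norm.mul_left (z ^ c)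

theorem summable_zpow_add_natCast_mul_add_natCast_mul (hz0 : z ≠ 0) (hz : ‖z‖ < 1) (c : ℤ)
    {a b : ℤ} (ha : 0 < a) (hb : 0 < b) :
    Summable (fun m : ℕ × ℕ => z ^ (c + (m.1 : ℤ) * a + (m.2 : ℤ) * b)) := by
  simpa [zpow_add₀ hz0, mul_assoc] using
    ((summable_norm_zpow_natCast_mul hz ha).mul_norm
      (summable_norm_zpow_natCast_mul hz hb)).of_norm.mul_left (z ^ c)

end Geometric

theorem hasSum_ite_mem_mul_zpow {𝕜 : Type*} [NormedField 𝕜] (S : Finset ℤ) (E : ℤ → 𝕜) (z : 𝕜) :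
    HasSum (fun k => (if k ∈ S then E k else 0) * z ^ k) (∑ ρ ∈ S, E ρ * z ^ ρ) := by
  rw [← Finset.sum_congr rfl fun k (hk : k ∈ S) => congrArg (· * z ^ k) (if_pos hk)]
  exact hasSum_sum_of_ne_finset_zero fun k hk => by simp [hk]

theorem natCard_add_natCast_mul_eq_one (a : ℤ) {b : ℤ} (hb : b ≠ 0) (n : ℕ) :
    Nat.card {l : ℕ // a + (l : ℤ) * b = a + n * b} = 1 := by
  rw [← Nat.card_unique (α := {l : ℕ // l = n})]
  exact Nat.card_congr (Equiv.subtypeEquivRight fun l => by simp [hb])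

theorem natCard_fst_add_snd_add_one_eq (n : ℕ) :
    Nat.card {l : ℕ × ℕ // l.1 + l.2 + 1 = n} = n := by
  cases n with
  | zero => simp
  | succ n =>
    calc Nat.card {l : ℕ × ℕ // l.1 + l.2 + 1 = n + 1}
        _ = Nat.card (Finset.HasAntidiagonal.antidiagonal n) :=
          Nat.card_congr (Equiv.subtypeEquivRight fun l => by simp)
        _ = n + 1 := by rw [Nat.card_eq_finsetCard, Finset.Nat.card_antidiagonal]

theorem natCard_add_natCast_add_natCast_add_one_mul_eq (a : ℤ) {b : ℤ} (hb : b ≠ 0) (n : ℕ) :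
    Nat.card {l : ℕ × ℕ // a + ((l.1 : ℤ) + l.2 + 1) * b = a + n * b} = n :=
  (Nat.card_congr (Equiv.subtypeEquivRight fun l => by simp [hb]; omega)).trans
    (natCard_fst_add_snd_add_one_eq n)

theorem natCard_shift_pairs_eq (P : ℤ × ℤ → Prop) :
    Nat.card {m : ℕ × ℕ // P ((m.1 : ℤ) + 1, (m.2 : ℤ) + 1)} =
      Nat.card {m : ℤ × ℤ // 1 ≤ m.1 ∧ 1 ≤ m.2 ∧ P m} :=
  Nat.card_congr
    { toFun := fun m => ⟨((m.1.1 : ℤ) + 1, (m.1.2 : ℤ) + 1), by omega, by omega, m.2⟩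
      invFun := fun m => ⟨((m.1.1 - 1).toNat, (m.1.2 - 1).toNat), by
        obtain ⟨⟨a, b⟩, ha, hb, hP⟩ := m
        convert hP using 2 <;> simp <;> omega⟩
      left_inv := fun m => by ext <;> simp
      right_inv := fun m => by obtain ⟨⟨a, b⟩, ha, hb, _⟩ := m; ext <;> simp <;> omega }

theorem natCard_exponent_fibers_eq {α₁ α₂ β : ℤ} (hα₁ : 0 < α₁) (hα₂ : 0 < α₂) (hβ : 0 < β)
    {Jq JF : ℤ} {A₀ A₁ : ℂ} {S : Finset ℤ} {E : ℤ → ℂ}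
    (h : ∀ z : ℂ, 0 < ‖z‖ → ‖z‖ < 1 →
      (∑' m : ℕ × ℕ, z ^ ((m.1 + 1 : ℤ) * α₁ + (m.2 + 1 : ℤ) * α₂ + Jq)) +
        A₀ * (∑' l : ℕ, z ^ (JF + (l : ℤ) * β)) +
        A₁ * (∑' l : ℕ × ℕ, z ^ (JF + ((l.1 : ℤ) + l.2 + 1) * β)) =
      ∑ ρ ∈ S, E ρ * z ^ ρ) (k : ℤ) :
    (Nat.card {m : ℕ × ℕ // (m.1 + 1 : ℤ) * α₁ + (m.2 + 1 : ℤ) * α₂ + Jq = k} : ℂ) +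
      A₀ * Nat.card {l : ℕ // JF + (l : ℤ) * β = k} +
      A₁ * Nat.card {l : ℕ × ℕ // JF + ((l.1 : ℤ) + l.2 + 1) * β = k} =
    if k ∈ S then E k else 0 := by
  classical
  set e₁ : ℕ × ℕ → ℤ := fun m => (m.1 + 1 : ℤ) * α₁ + (m.2 + 1 : ℤ) * α₂ + Jq
  set e₂ : ℕ → ℤ := fun l => JF + (l : ℤ) * β
  set e₃ : ℕ × ℕ → ℤ := fun l => JF + ((l.1 : ℤ) + l.2 + 1) * β
  set c : ℤ → ℂ := fun k => Nat.card {m // e₁ m = k} + A₀ * Nat.card {l // e₂ l = k} +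
    A₁ * Nat.card {l // e₃ l = k} - if k ∈ S then E k else 0
  suffices c = 0 from sub_eq_zero.mp (congr_fun this k)
  obtain ⟨b, hb⟩ := S.bddBelow
  refine eq_zero_of_hasSum_zpow_eq_zero (N := min (min Jq JF) b) (fun k hk => ?_) one_pos
    fun z hz hz1 => ?_
  · have he₁ : ∀ m, Jq ≤ e₁ m := fun m => by simp only [e₁]; nlinarith
    have he₂ : ∀ l, JF ≤ e₂ l := fun l => by simp only [e₂]; nlinarith
    have he₃ : ∀ l, JF ≤ e₃ l := fun l => by simp only [e₃]; nlinarith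
    have hkS : k ∉ S := fun hkS => by have := hb hkS; omega
    simp [c, natCard_fiber_eq_zero_of_lt he₁ (by omega : k < Jq),
      natCard_fiber_eq_zero_of_lt he₂ (by omega : k < JF),
      natCard_fiber_eq_zero_of_lt he₃ (by omega : k < JF), hkS]
  · have hz0 : z ≠ 0 := norm_pos_iff.1 hz
    have hs₁ : Summable fun m => z ^ e₁ m :=
      (summable_zpow_add_natCast_mul_add_natCast_mul hz0 hz1 (α₁ + α₂ + Jq) hα₁ hα₂).congr
        fun m => congrArg (z ^ ·) (by ring)
    have hs₂ : Summable fun l => z ^ e₂ l := summable_zpow_add_natCast_mul hz0 hz1 JF hβ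
    have hs₃ : Summable fun l => z ^ e₃ l :=
      (summable_zpow_add_natCast_mul_add_natCast_mul hz0 hz1 (JF + β) hβ hβ).congr
        fun l => congrArg (z ^ ·) (by ring)
    have H := (((hs₁.hasSum.natCard_fiber_smul (φ := (z ^ ·))).add
      ((hs₂.hasSum.natCard_fiber_smul (φ := (z ^ ·))).mul_left A₀)).add
      ((hs₃.hasSum.natCard_fiber_smul (φ := (z ^ ·))).mul_left A₁)).sub
      (hasSum_ite_mem_mul_zpow S E z)
    rw [sub_eq_zero.mpr (h z hz hz1)] at H
    refine H.congr_fun fun k => ?_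
    simp only [c, nsmul_eq_mul]
    ring

/-- Item 1 of Proposition 4.3 in abstract form: if the character series equals a
Laurent polynomial on `0 < |λ| < 1`, the counting function is eventually the
affine map `−A₀ − n₀A₁`. -/
theorem stmt_14 (α₁ α₂ β : ℤ) (hα₁ : 0 < α₁) (hα₂ : 0 < α₂) (hβ : 0 < β)
    (Jq JF A₀ A₁ : ℤ) (S : Finset ℤ) (E : ℤ → ℂ)
    (h : ∀ lam : ℂ, 0 < ‖lam‖ → ‖lam‖ < 1 →
      (∑' m : ℕ × ℕ, lam ^ ((m.1 + 1 : ℤ) * α₁ + (m.2 + 1 : ℤ) * α₂ + Jq)) +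
        (A₀ : ℂ) * (∑' l : ℕ, lam ^ (JF + (l : ℤ) * β)) +
        (A₁ : ℂ) * (∑' l : ℕ × ℕ, lam ^ (JF + ((l.1 : ℤ) + l.2 + 1) * β)) =
      ∑ ρ ∈ S, E ρ * lam ^ ρ) :
    ∃ M : ℕ, ∀ n₀ : ℕ, M ≤ n₀ →
      (Nat.card {m : ℤ × ℤ // 1 ≤ m.1 ∧ 1 ≤ m.2 ∧
          m.1 * α₁ + m.2 * α₂ = JF - Jq + (n₀ : ℤ) * β} : ℤ) =
        -A₀ - (n₀ : ℤ) * A₁ := by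
  obtain ⟨B, hB⟩ := S.bddAbove
  refine ⟨(B - JF).toNat + 1, fun n₀ hn₀ => ?_⟩
  have hnotS : JF + n₀ * β ∉ S := fun hS => by
    have := hB hS
    have := le_mul_of_one_le_right (by positivity : (0 : ℤ) ≤ n₀) hβ
    omega
  have hcount : Nat.card {m : ℕ × ℕ // (m.1 + 1 : ℤ) * α₁ + (m.2 + 1 : ℤ) * α₂ + Jq =
      JF + n₀ * β} = Nat.card {m : ℤ × ℤ // 1 ≤ m.1 ∧ 1 ≤ m.2 ∧
        m.1 * α₁ + m.2 * α₂ = JF - Jq + (n₀ : ℤ) * β} :=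
    (natCard_shift_pairs_eq fun m => m.1 * α₁ + m.2 * α₂ + Jq = JF + n₀ * β).trans
      (Nat.card_congr (Equiv.subtypeEquivRight fun m => by omega))
  have hcoeff := natCard_exponent_fibers_eq hα₁ hα₂ hβ h (JF + n₀ * β)
  rw [hcount, natCard_add_natCast_mul_eq_one JF hβ.ne',
    natCard_add_natCast_add_natCast_add_one_mul_eq JF hβ.ne', if_neg hnotS] at hcoeff
  apply Int.cast_injective (α := ℂ)
  push_cast
  linear_combination hcoeff
end
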